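/- Let a, c, d be three distinct letters and let L ⊆ {a}* be any language that is not semilinear. Then the language L' = c·L·d ∪ d·{a}*·c over the alphabet {a, c, d} is semilinear, but the left quotient {c}⁻¹·L' = {w : cw ∈ L'} equals L·d and is not semilinear. (Hence the class of semilinear languages is not closed under left quotient.) -/

import Mathlib

/-- A set `Q ⊆ ℕ^α` is linear if it has a constant vector `v₀` and finitely many
period vectors `v₁, …, v_l` with `Q = {v₀ + i₁v₁ + ⋯ + i_l v_l}`. -/
def IsLinearSet' {α : Type*} (Q : Set (α → ℕ)) : Prop :=
  ∃ (v₀ : α → ℕ) (l : ℕ) (v : Fin l → α → ℕ),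
    Q = { x | ∃ c : Fin l → ℕ, x = v₀ + ∑ j, c j • v j }

/-- A set is semilinear if it is a finite union of linear sets. -/
def IsSemilinearSet' {α : Type*} (Q : Set (α → ℕ)) : Prop :=
  ∃ (n : ℕ) (Qs : Fin n → Set (α → ℕ)),
    (∀ i, IsLinearSet' (Qs i)) ∧ Q = ⋃ i, Qs i

open Classical in
/-- The Parikh image of a word: `parikhWord w a = |w|_a`. -/
noncomputable def parikhWord {σ : Type*} (w : List σ) : σ → ℕ :=
  fun a => w.count a

/-- A language is semilinear if its Parikh image is a semilinear set. -/
def IsSemilinearLanguage {σ : Type*} (L : Set (List σ)) : Prop :=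
  IsSemilinearSet' (parikhWord '' L)

/-! The Parikh image of `c·L·d ∪ d·a*·c` is the linear set `e_c + e_d + ℕ·e_a`: the branch
`d·a*·c` alone already covers it. Quotienting by `c` removes that branch and leaves `L·d`, whose
Parikh image is the translate `ψ(L) + e_d`. Each linear component of a translate `Q + v` has its
base in `Q + v`, so translating it back by `-v` is again linear; hence `L·d` semilinear would
make `L` semilinear. -/

section Parikh

variable {σ : Type*}

theorem parikhWord_append (u v : List σ) :
    parikhWord (u ++ v) = parikhWord u + parikhWord v := by
  funext x
  simp [parikhWord, List.count_append]

variable [DecidableEq σ]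

theorem parikhWord_singleton (s : σ) : parikhWord [s] = Pi.single s 1 := by
  funext x
  by_cases h : x = s
  · simp [parikhWord, h]
  · simp [parikhWord, h, Ne.symm h]

theorem parikhWord_cons (s : σ) (w : List σ) :
    parikhWord (s :: w) = Pi.single s 1 + parikhWord w := by
  rw [← List.singleton_append, parikhWord_append, parikhWord_singleton]

theorem parikhWord_of_forall_eq {a : σ} {w : List σ} (hw : ∀ y ∈ w, y = a) :
    parikhWord w = w.length • Pi.single a 1 := by
  induction w with
  | nil => funext x; simp [parikhWord]
  | cons s w ih =>
    rw [parikhWord_cons, ih fun y hy => hw y (List.mem_cons_of_mem s hy),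
      hw s List.mem_cons_self, List.length_cons, succ_nsmul, add_comm]

theorem parikhWord_cons_append_singleton {a : σ} {w : List σ} (hw : ∀ y ∈ w, y = a)
    (p q : σ) :
    parikhWord (p :: (w ++ [q])) = Pi.single p 1 + Pi.single q 1 + w.length • Pi.single a 1 := by
  rw [parikhWord_cons, parikhWord_append, parikhWord_singleton, parikhWord_of_forall_eq hw]
  abel

end Parikh

section Semilinear

variable {α : Type*}

theorem IsLinearSet'.isSemilinearSet' {Q : Set (α → ℕ)} (hQ : IsLinearSet' Q) :
    IsSemilinearSet' Q :=
  ⟨1, fun _ => Q, fun _ => hQ, (Set.iUnion_const Q).symm⟩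

theorem isLinearSet'_range_add_nsmul (v₀ v : α → ℕ) :
    IsLinearSet' (Set.range fun n : ℕ => v₀ + n • v) := by
  refine ⟨v₀, 1, fun _ => v, ?_⟩
  ext x
  simp only [Set.mem_range, Set.mem_ofPred_eq, Fin.sum_univ_one]
  exact ⟨fun ⟨n, hn⟩ => ⟨fun _ => n, hn.symm⟩, fun ⟨c, hc⟩ => ⟨c 0, hc.symm⟩⟩

theorem IsLinearSet'.preimage_add_right {Q : Set (α → ℕ)} (hQ : IsLinearSet' Q) {v : α → ℕ}
    (hsub : Q ⊆ Set.range (· + v)) : IsLinearSet' ((· + v) ⁻¹' Q) := by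
  obtain ⟨v₀, l, p, rfl⟩ := hQ
  obtain ⟨u, rfl⟩ := hsub (a := v₀) ⟨0, by simp⟩
  refine ⟨u, l, p, ?_⟩
  ext x
  simp only [Set.mem_preimage, Set.mem_ofPred_eq, add_right_comm u v]
  exact exists_congr fun c => (add_left_injective v).eq_iff

theorem IsSemilinearSet'.of_image_add_right {Q : Set (α → ℕ)} {v : α → ℕ}
    (h : IsSemilinearSet' ((· + v) '' Q)) : IsSemilinearSet' Q := by
  obtain ⟨n, Qs, hlin, hQ⟩ := h
  refine ⟨n, fun i => (· + v) ⁻¹' Qs i, fun i => (hlin i).preimage_add_right ?_, ?_⟩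
  · exact (Set.subset_iUnion Qs i).trans (hQ ▸ Set.image_subset_range _ _)
  · rw [← Set.preimage_iUnion, ← hQ, (add_left_injective v).preimage_image]

end Semilinear

theorem IsSemilinearLanguage.of_image_append_singleton {σ : Type*} {L : Set (List σ)} {d : σ}
    (h : IsSemilinearLanguage ((· ++ [d]) '' L)) : IsSemilinearLanguage L := by
  classical
  refine IsSemilinearSet'.of_image_add_right (v := Pi.single d 1) ?_
  unfold IsSemilinearLanguage at h
  rw [Set.image_image] at h ⊢
  simpa only [parikhWord_append, parikhWord_singleton] using h

section Sandwich

variable {σ : Type*}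

theorem preimage_cons_sandwich_union_eq_image {c d : σ} (hcd : c ≠ d) (L : Set (List σ))
    (P : List σ → Prop) :
    { w | c :: w ∈
        ({ x | ∃ w ∈ L, x = c :: (w ++ [d]) } ∪ { x | ∃ w, P w ∧ x = d :: (w ++ [c]) }) }
      = (· ++ [d]) '' L := by
  ext w
  constructor
  · rintro (⟨u, hu, heq⟩ | ⟨_, _, heq⟩)
    · exact ⟨u, hu, (List.cons.inj heq).2.symm⟩
    · exact absurd (List.cons.inj heq).1 hcd
  · rintro ⟨u, hu, rfl⟩
    exact Or.inl ⟨u, hu, rfl⟩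

theorem parikhWord_image_sandwich_union_eq_range [DecidableEq σ] {a : σ} (c d : σ)
    {L : Set (List σ)} (hLa : ∀ w ∈ L, ∀ x ∈ w, x = a) :
    parikhWord ''
        ({ x | ∃ w ∈ L, x = c :: (w ++ [d]) } ∪
         { x | ∃ w : List σ, (∀ y ∈ w, y = a) ∧ x = d :: (w ++ [c]) })
      = Set.range fun n : ℕ => Pi.single c 1 + Pi.single d 1 + n • Pi.single a 1 := by
  ext v
  constructor
  · rintro ⟨_, ⟨w, hw, rfl⟩ | ⟨w, hw, rfl⟩, rfl⟩
    · exact ⟨w.length, (parikhWord_cons_append_singleton (hLa w hw) c d).symm⟩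
    · exact ⟨w.length, by rw [parikhWord_cons_append_singleton hw d c, add_comm (Pi.single d 1)]⟩
  · rintro ⟨n, rfl⟩
    have hrep : ∀ y ∈ List.replicate n a, y = a := fun _ => List.eq_of_mem_replicate
    refine ⟨d :: (List.replicate n a ++ [c]), Or.inr ⟨_, hrep, rfl⟩, ?_⟩
    rw [parikhWord_cons_append_singleton hrep, List.length_replicate, add_comm (Pi.single d 1)]

end Sandwich

theorem semilinear_not_closed_left_quotient_general {σ : Type*}
    (a c d : σ) (hcd : c ≠ d)
    (L : Set (List σ)) (hLa : ∀ w ∈ L, ∀ x ∈ w, x = a)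
    (hL : ¬ IsSemilinearLanguage L) :
    IsSemilinearLanguage
      ({ x | ∃ w ∈ L, x = c :: (w ++ [d]) } ∪
       { x | ∃ w : List σ, (∀ y ∈ w, y = a) ∧ x = d :: (w ++ [c]) }) ∧
    { w | c :: w ∈
        ({ x | ∃ w ∈ L, x = c :: (w ++ [d]) } ∪
         { x | ∃ w : List σ, (∀ y ∈ w, y = a) ∧ x = d :: (w ++ [c]) }) }
      = (fun w => w ++ [d]) '' L ∧
    ¬ IsSemilinearLanguage
      { w | c :: w ∈
        ({ x | ∃ w ∈ L, x = c :: (w ++ [d]) } ∪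
         { x | ∃ w : List σ, (∀ y ∈ w, y = a) ∧ x = d :: (w ++ [c]) }) } := by
  classical
  have hquot := preimage_cons_sandwich_union_eq_image hcd L (fun w => ∀ y ∈ w, y = a)
  refine ⟨?_, hquot, ?_⟩
  · unfold IsSemilinearLanguage
    rw [parikhWord_image_sandwich_union_eq_range c d hLa]
    exact (isLinearSet'_range_add_nsmul _ _).isSemilinearSet'
  · rw [hquot]
    exact fun h => hL h.of_image_append_singleton

/-- for distinct letters a, c, d and any non-semilinear L ⊆ {a}*, the
language L' = c·L·d ∪ d·{a}*·c is semilinear, but the left quotient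
{c}⁻¹·L' = {w : cw ∈ L'} equals L·d and is not semilinear. -/
theorem semilinear_not_closed_left_quotient {σ : Type*} [Fintype σ]
    (a c d : σ) (hac : a ≠ c) (had : a ≠ d) (hcd : c ≠ d)
    (L : Set (List σ)) (hLa : ∀ w ∈ L, ∀ x ∈ w, x = a)
    (hL : ¬ IsSemilinearLanguage L) :
    IsSemilinearLanguage
      ({ x | ∃ w ∈ L, x = c :: (w ++ [d]) } ∪
       { x | ∃ w : List σ, (∀ y ∈ w, y = a) ∧ x = d :: (w ++ [c]) }) ∧
    { w | c :: w ∈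
        ({ x | ∃ w ∈ L, x = c :: (w ++ [d]) } ∪
         { x | ∃ w : List σ, (∀ y ∈ w, y = a) ∧ x = d :: (w ++ [c]) }) }
      = (fun w => w ++ [d]) '' L ∧
    ¬ IsSemilinearLanguage
      { w | c :: w ∈
        ({ x | ∃ w ∈ L, x = c :: (w ++ [d]) } ∪
         { x | ∃ w : List σ, (∀ y ∈ w, y = a) ∧ x = d :: (w ++ [c]) }) } :=
  semilinear_not_closed_left_quotient_general a c d hcd L hLa hL
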